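/- Let P be a d-polytope (d ≥ 3), S a simplex facet in bounded position, F, N disjoint subsets of facets adjacent to S with F nonsimple. A k-face G of P (0 ≤ k ≤ d−2) is again a face of the pseudo-stacked polytope conv(P ∪ {v}) if and only if there is a facet of P not in F ∪ N ∪ {S} that contains G. -/

import Mathlib

open Set
open scoped Classical

noncomputable section

abbrev Pt (d : ℕ) := EuclideanSpace ℝ (Fin d)

/-- A polytope: convex hull of finitely many points. -/
def IsPolytope {d : ℕ} (P : Set (Pt d)) : Prop :=
  ∃ V : Finset (Pt d), P = convexHull ℝ (V : Set (Pt d))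

/-- Faces of a polytope: the polytope itself, the empty set, and exposed faces. -/
def IsFace {d : ℕ} (P F : Set (Pt d)) : Prop :=
  F = P ∨ F = ∅ ∨ ∃ (u : Pt d) (c : ℝ),
    (∀ x ∈ P, c ≤ (inner ℝ u x : ℝ)) ∧ F = {x ∈ P | (inner ℝ u x : ℝ) = c}

/-- Dimension of a face (the empty face has dimension `-1`). -/
def faceDim {d : ℕ} (F : Set (Pt d)) : ℤ :=
  if F = ∅ then -1 else (Module.finrank ℝ (vectorSpan ℝ F) : ℤ)

/-- A full-dimensional polytope in `ℝ^d`. -/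
def IsDPolytope {d : ℕ} (P : Set (Pt d)) : Prop :=
  IsPolytope P ∧ faceDim P = (d : ℤ)

def IsFacet {d : ℕ} (P F : Set (Pt d)) : Prop :=
  IsFace P F ∧ faceDim F = (d : ℤ) - 1

def IsVertex {d : ℕ} (P : Set (Pt d)) (w : Pt d) : Prop :=
  IsFace P {w}

/-- The number of vertices of `P` lying in a given set. -/
def nverts {d : ℕ} (P X : Set (Pt d)) : ℕ :=
  Nat.card {w : Pt d // IsVertex P w ∧ w ∈ X}

/-- Entry `f_k` of the f-vector: the number of `k`-dimensional faces. -/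
def fk {d : ℕ} (k : ℤ) (P : Set (Pt d)) : ℕ :=
  Nat.card {F : Set (Pt d) // IsFace P F ∧ faceDim F = k}

/-- The number of facets of `P` containing the face `G`. -/
def fdeg {d : ℕ} (P G : Set (Pt d)) : ℕ :=
  Nat.card {F : Set (Pt d) // IsFacet P F ∧ G ⊆ F}

/-- `u, c` define the supporting hyperplane of the facet `G` of `P`,
oriented so that `P` lies on the `≥` side. -/
def SupportsFacet {d : ℕ} (P G : Set (Pt d)) (u : Pt d) (c : ℝ) : Prop :=
  (∀ x ∈ P, c ≤ (inner ℝ u x : ℝ)) ∧ G = {x ∈ P | (inner ℝ u x : ℝ) = c}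

/-- Two facets are adjacent if they intersect in a ridge. -/
def AdjacentFacet {d : ℕ} (P S G : Set (Pt d)) : Prop :=
  IsFacet P S ∧ IsFacet P G ∧ S ≠ G ∧ faceDim (S ∩ G) = (d : ℤ) - 2

/-- A simplex facet: a facet with exactly `d` vertices
(combinatorially a `(d-1)`-simplex). -/
def IsSimplexFacet {d : ℕ} (P S : Set (Pt d)) : Prop :=
  IsFacet P S ∧ nverts P S = d

/-- The facet `S` of `P` is in bounded position: the intersection of the
facet halfspaces other than the one of `S` is bounded. -/
def BoundedPosition {d : ℕ} (P S : Set (Pt d)) : Prop :=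
  Bornology.IsBounded {x : Pt d | ∀ G u c, IsFacet P G → G ≠ S →
    SupportsFacet P G u c → c ≤ (inner ℝ u x : ℝ)}

/-- The region `N(S; 𝓕, 𝓝; P)`: points strictly beyond the hyperplanes of
`S` and of the facets in `𝓝`, on the hyperplanes of facets in `𝓕`, and
strictly beneath all other facet hyperplanes of `P`. -/
def PseudoRegion {d : ℕ} (P S : Set (Pt d)) (𝓕 𝓝 : Set (Set (Pt d))) :
    Set (Pt d) :=
  {v | ∀ G u c, IsFacet P G → SupportsFacet P G u c →
    ((G = S ∨ G ∈ 𝓝) → (inner ℝ u v : ℝ) < c) ∧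
    (G ∈ 𝓕 → (inner ℝ u v : ℝ) = c) ∧
    ((G ≠ S ∧ G ∉ 𝓝 ∧ G ∉ 𝓕) → c < (inner ℝ u v : ℝ))}

/-- `𝓕` is nonsimple: there is no pair of adjacent facets in `𝓕` having a
common `(d-3)`-face with `S`. -/
def Nonsimple {d : ℕ} (P S : Set (Pt d)) (𝓕 : Set (Set (Pt d))) : Prop :=
  ¬ ∃ G G' R, G ∈ 𝓕 ∧ G' ∈ 𝓕 ∧ G ≠ G' ∧ AdjacentFacet P G G' ∧
    IsFace P R ∧ faceDim R = (d : ℤ) - 3 ∧ R ⊆ G ∩ G' ∩ S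

/-- The pseudo-stacking of `P` at the point `v`: `conv (P ∪ {v})`. -/
def pseudoStack {d : ℕ} (P : Set (Pt d)) (v : Pt d) : Set (Pt d) :=
  convexHull ℝ (P ∪ {v})

/-- The standing hypotheses of the pseudo-stacking construction. -/
def PseudoStackSetup {d : ℕ} (P S : Set (Pt d)) (𝓕 𝓝 : Set (Set (Pt d))) : Prop :=
  IsDPolytope P ∧ 3 ≤ d ∧ IsSimplexFacet P S ∧ BoundedPosition P S ∧
  (∀ G ∈ 𝓕 ∪ 𝓝, AdjacentFacet P S G) ∧ Disjoint 𝓕 𝓝 ∧ Nonsimple P S 𝓕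

/-!
A face `G` of `conv (P ∪ {v})` lying in `P` is cut out by a hyperplane with `P` on one side and
`v` strictly on that side. Rotating this hyperplane about its contact set with `P`, keeping `P` on
one side and the signed distance of `v` fixed, brings a further vertex of `P` onto it at each
step and ends at a facet hyperplane of `P` whose facet contains `G` and has `v` strictly beneath
it; by the definition of the region of `v`, that facet is neither `S` nor in `𝓕 ∪ 𝓝`.
Conversely, if `G` lies in a facet with `v` strictly beneath it, tilting the hyperplane of that
facet slightly towards one exposing `G` in `P` gives a hyperplane exposing `G` in
`conv (P ∪ {v})`.
-/

open scoped InnerProductSpace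

theorem exists_pos_add_mul_nonneg_and_eq_zero {ι : Type*} (s : Finset ι) {f g : ι → ℝ}
    (hf : ∀ i ∈ s, 0 ≤ f i) (hfg : ∀ i ∈ s, g i < 0 → 0 < f i) (hg : ∃ i ∈ s, g i < 0) :
    ∃ t : ℝ, 0 < t ∧ (∀ i ∈ s, 0 ≤ f i + t * g i) ∧ ∃ i ∈ s, 0 < f i ∧ f i + t * g i = 0 := by
  set B := s.filter fun i => g i < 0
  have hB : B.Nonempty :=
    let ⟨i, hi, hgi⟩ := hg
    ⟨i, Finset.mem_filter.2 ⟨hi, hgi⟩⟩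
  obtain ⟨j, hjB, htj⟩ := Finset.exists_mem_eq_inf' hB fun i => f i / -g i
  obtain ⟨hj, hgj⟩ := Finset.mem_filter.1 hjB
  have ht : 0 < f j / -g j := div_pos (hfg j hj hgj) (neg_pos.2 hgj)
  refine ⟨f j / -g j, ht, fun i hi => ?_, j, hj, hfg j hj hgj,
    by rw [div_neg, neg_mul, div_mul_cancel₀ _ hgj.ne, add_neg_cancel]⟩
  rcases lt_or_ge (g i) 0 with hgi | hgi
  · have hle := htj ▸ Finset.inf'_le (fun i => f i / -g i) (Finset.mem_filter.2 ⟨hi, hgi⟩)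
    rw [le_div_iff₀ (neg_pos.2 hgi)] at hle
    linarith
  · exact add_nonneg (hf i hi) (mul_nonneg ht.le hgi)

section InnerProductSpace

variable {E : Type*} [NormedAddCommGroup E] [InnerProductSpace ℝ E]

theorem convex_setOf_le_inner (u : E) (c : ℝ) : Convex ℝ {x | c ≤ ⟪u, x⟫_ℝ} :=
  convex_halfSpace_ge (innerₗ E u).isLinear c

theorem convex_setOf_inner_eq (u : E) (c : ℝ) : Convex ℝ {x | ⟪u, x⟫_ℝ = c} :=
  convex_hyperplane (innerₗ E u).isLinear c

theorem le_inner_of_mem_convexHull {s : Set E} {u : E} {c : ℝ} (hs : ∀ p ∈ s, c ≤ ⟪u, p⟫_ℝ)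
    {x : E} (hx : x ∈ convexHull ℝ s) : c ≤ ⟪u, x⟫_ℝ :=
  convexHull_min hs (convex_setOf_le_inner u c) hx

theorem setOf_inner_eq_convexHull_filter {V : Finset E} {u : E} {c : ℝ}
    (hc : ∀ p ∈ V, c ≤ ⟪u, p⟫_ℝ) :
    {x ∈ convexHull ℝ (V : Set E) | ⟪u, x⟫_ℝ = c} =
      convexHull ℝ (V.filter fun p => ⟪u, p⟫_ℝ = c : Set E) := by
  refine Subset.antisymm ?_ fun x hx =>
    ⟨convexHull_mono (Finset.coe_subset.2 (Finset.filter_subset _ _)) hx, ?_⟩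
  · rintro x ⟨hx, hxc⟩
    obtain ⟨w, hw0, hw1, rfl⟩ := Finset.mem_convexHull'.1 hx
    -- the slacks `⟪u, p⟫ - c` are nonnegative and average to `0`
    have hslack : ∑ p ∈ V, w p * (⟪u, p⟫_ℝ - c) = 0 := by
      simp only [mul_sub, Finset.sum_sub_distrib, ← Finset.sum_mul, hw1, one_mul,
        ← real_inner_smul_right, ← inner_sum, hxc, sub_self]
    have hzero := (Finset.sum_eq_zero_iff_of_nonneg fun p hp =>
      mul_nonneg (hw0 p hp) (sub_nonneg.2 (hc p hp))).1 hslack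
    have hw : ∀ p ∈ V, ⟪u, p⟫_ℝ ≠ c → w p = 0 := fun p hp hpc =>
      (mul_eq_zero.1 (hzero p hp)).resolve_right (sub_ne_zero.2 hpc)
    refine Finset.mem_convexHull'.2 ⟨w, fun p hp => hw0 p (Finset.mem_filter.1 hp).1, ?_, ?_⟩
    · rwa [Finset.sum_filter_of_ne fun p hp hwp => by_contra fun h => hwp (hw p hp h)]
    · exact Finset.sum_filter_of_ne fun p hp hwp => by_contra fun h => hwp (by simp [hw p hp h])
  · exact convexHull_min (fun p hp => ((Finset.mem_filter.1 hp).2 : _))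
      (convex_setOf_inner_eq u c) hx

theorem mem_orthogonal_vectorSpan {A : Set E} {u : E} {c : ℝ} (hA : ∀ a ∈ A, ⟪u, a⟫_ℝ = c) :
    u ∈ (vectorSpan ℝ A)ᗮ := by
  have hle : vectorSpan ℝ A ≤ (ℝ ∙ u)ᗮ := by
    rw [vectorSpan_def, Submodule.span_le]
    rintro _ ⟨a, ha, b, hb, rfl⟩
    simp [Submodule.mem_orthogonal_singleton_iff_inner_right, inner_sub_right, hA a ha, hA b hb]
  exact (Submodule.mem_orthogonal' _ u).2 fun x hx =>
    Submodule.mem_orthogonal_singleton_iff_inner_right.1 (hle hx)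

theorem setOf_inner_eq_convexHull_insert {P : Set E} (hP : Convex ℝ P) {u v : E} {c : ℝ}
    (hPc : ∀ x ∈ P, c ≤ ⟪u, x⟫_ℝ) (hv : c < ⟪u, v⟫_ℝ) :
    {x ∈ convexHull ℝ (insert v P) | ⟪u, x⟫_ℝ = c} = {x ∈ P | ⟪u, x⟫_ℝ = c} := by
  refine Subset.antisymm ?_ fun x hx => ⟨subset_convexHull ℝ _ (mem_insert_of_mem _ hx.1), hx.2⟩
  rintro x ⟨hx, hxc⟩
  rcases P.eq_empty_or_nonempty with rfl | hPne
  · rw [insert_empty_eq, convexHull_singleton, mem_singleton_iff] at hx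
    subst hx
    exact absurd hxc hv.ne'
  rw [convexHull_insert hPne, hP.convexHull_eq, mem_convexJoin] at hx
  obtain ⟨_, rfl, q, hq, a, b, ha, hb, hab, rfl⟩ := hx
  rw [inner_add_right, real_inner_smul_right, real_inner_smul_right] at hxc
  have ha0 : a = 0 := by
    by_contra ha0
    have hc : c = a * c + b * c := by rw [← add_mul, hab, one_mul]
    nlinarith [mul_pos (ha.lt_of_ne' ha0) (sub_pos.2 hv), mul_nonneg hb (sub_nonneg.2 (hPc q hq))]
  obtain rfl : b = 1 := by linarith
  subst ha0
  rw [zero_smul, one_smul, zero_add]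
  exact ⟨hq, by simpa using hxc⟩

theorem exists_support_inter_of_lt {P : Set E} {u w v : E} {c b : ℝ}
    (hu : ∀ x ∈ P, c ≤ ⟪u, x⟫_ℝ) (hw : ∀ x ∈ P, b ≤ ⟪w, x⟫_ℝ) (hv : c < ⟪u, v⟫_ℝ) :
    ∃ u' c', (∀ x ∈ P, c' ≤ ⟪u', x⟫_ℝ) ∧ c' < ⟪u', v⟫_ℝ ∧
      {x ∈ P | ⟪u', x⟫_ℝ = c'} = {x ∈ P | ⟪u, x⟫_ℝ = c ∧ ⟪w, x⟫_ℝ = b} := by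
  obtain ⟨ε, hε, hεv⟩ := exists_pos_mul_lt (sub_pos.2 hv) (b - ⟪w, v⟫_ℝ)
  have key : ∀ x, ⟪u + ε • w, x⟫_ℝ - (c + ε * b) = ⟪u, x⟫_ℝ - c + ε * (⟪w, x⟫_ℝ - b) :=
    fun x => by rw [inner_add_left, real_inner_smul_left]; ring
  refine ⟨u + ε • w, c + ε * b, fun x hx => sub_nonneg.1 ?_, sub_pos.1 ?_, ?_⟩
  · rw [key]
    exact add_nonneg (sub_nonneg.2 (hu x hx)) (mul_nonneg hε.le (sub_nonneg.2 (hw x hx)))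
  · rw [key]
    linarith
  · ext x
    refine and_congr_right fun hx => ?_
    rw [← sub_eq_zero, key, add_eq_zero_iff_of_nonneg (sub_nonneg.2 (hu x hx))
      (mul_nonneg hε.le (sub_nonneg.2 (hw x hx))), mul_eq_zero, sub_eq_zero, sub_eq_zero,
      or_iff_right hε.ne']

variable [FiniteDimensional ℝ E]

theorem exists_inner_sub_eq_zero_and_neg {V A : Set E} (hV : vectorSpan ℝ V = ⊤)
    (hA : vectorSpan ℝ A ≠ ⊤) {p₀ : E} (hp₀ : p₀ ∈ A) :
    ∃ w : E, (∀ a ∈ A, ⟪w, a - p₀⟫_ℝ = 0) ∧ ∃ p ∈ V, ⟪w, p - p₀⟫_ℝ < 0 := by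
  set U := vectorSpan ℝ A
  obtain ⟨p, hp, hpU⟩ : ∃ p ∈ V, p - p₀ ∉ U := by
    by_contra! hVU
    refine hA (eq_top_iff.2 (hV ▸ ?_))
    rw [vectorSpan_def, Submodule.span_le]
    rintro _ ⟨p, hp, q, hq, rfl⟩
    simpa using U.sub_mem (hVU p hp) (hVU q hq)
  obtain ⟨w, hw, hwp⟩ : ∃ w ∈ Uᗮ, ⟪w, p - p₀⟫_ℝ ≠ 0 := by
    by_contra! h
    exact hpU (U.orthogonal_orthogonal ▸ (Submodule.mem_orthogonal _ _).2 h)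
  have hwA : ∀ a ∈ A, ⟪w, a - p₀⟫_ℝ = 0 := fun a ha =>
    Submodule.inner_left_of_mem_orthogonal (vsub_mem_vectorSpan ℝ ha hp₀) hw
  rcases hwp.lt_or_gt with hneg | hpos
  · exact ⟨w, hwA, p, hp, hneg⟩
  · exact ⟨-w, fun a ha => by rw [inner_neg_left, hwA a ha, neg_zero], p, hp,
      by rwa [inner_neg_left, neg_lt_zero]⟩

theorem exists_rotated_support {V : Finset E} (hV : vectorSpan ℝ (V : Set E) = ⊤) {u : E}
    {c : ℝ} (hc : ∀ p ∈ V, c ≤ ⟪u, p⟫_ℝ) {p₀ : E} (hp₀ : p₀ ∈ V) (hp₀c : ⟪u, p₀⟫_ℝ = c)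
    {z : E} (hT : vectorSpan ℝ (insert z (V.filter fun p => ⟪u, p⟫_ℝ = c : Set E)) ≠ ⊤) :
    ∃ u' c', (∀ p ∈ V, c' ≤ ⟪u', p⟫_ℝ) ∧ (∀ p ∈ V, ⟪u, p⟫_ℝ = c → ⟪u', p⟫_ℝ = c') ∧
      (∃ p ∈ V, ⟪u, p⟫_ℝ ≠ c ∧ ⟪u', p⟫_ℝ = c') ∧ ⟪u', z⟫_ℝ - c' = ⟪u, z⟫_ℝ - c := by
  have hmem : ∀ p ∈ V, ⟪u, p⟫_ℝ = c → p ∈ insert z (V.filter fun p => ⟪u, p⟫_ℝ = c : Set E) :=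
    fun p hp hpc => mem_insert_of_mem _ (by simpa using ⟨hp, hpc⟩)
  obtain ⟨w, hw, hneg⟩ := exists_inner_sub_eq_zero_and_neg hV hT (hmem p₀ hp₀ hp₀c)
  obtain ⟨t, -, hnonneg, j, hj, hjc, hj0⟩ := exists_pos_add_mul_nonneg_and_eq_zero V
    (f := fun p => ⟪u, p⟫_ℝ - c) (g := fun p => ⟪w, p - p₀⟫_ℝ)
    (fun p hp => sub_nonneg.2 (hc p hp))
    (fun p hp hgp => (sub_nonneg.2 (hc p hp)).lt_of_ne fun hpc =>
      hgp.ne (hw p (hmem p hp (sub_eq_zero.1 hpc.symm))))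
    hneg
  have key : ∀ x, ⟪u + t • w, x⟫_ℝ - (c + t * ⟪w, p₀⟫_ℝ) = ⟪u, x⟫_ℝ - c + t * ⟪w, x - p₀⟫_ℝ :=
    fun x => by rw [inner_add_left, real_inner_smul_left, inner_sub_right]; ring
  refine ⟨u + t • w, c + t * ⟪w, p₀⟫_ℝ, fun p hp => sub_nonneg.1 (key p ▸ hnonneg p hp),
    fun p hp hpc => sub_eq_zero.1 ?_, ⟨j, hj, (sub_pos.1 hjc).ne', sub_eq_zero.1 (key j ▸ hj0)⟩,
    by rw [key, hw z (mem_insert _ _), mul_zero, add_zero]⟩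
  rw [key, hpc, hw p (hmem p hp hpc), sub_self, mul_zero, add_zero]

end InnerProductSpace

section Polytope

variable {d : ℕ}

theorem IsFace.subset {P F : Set (Pt d)} (h : IsFace P F) : F ⊆ P := by
  rcases h with rfl | rfl | ⟨u, c, -, rfl⟩
  exacts [subset_rfl, empty_subset _, sep_subset _ _]

theorem IsPolytope.convex {P : Set (Pt d)} (hP : IsPolytope P) : Convex ℝ P := by
  obtain ⟨V, rfl⟩ := hP
  exact convex_convexHull ℝ _

theorem nonempty_of_faceDim_nonneg {F : Set (Pt d)} (h : 0 ≤ faceDim F) : F.Nonempty := by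
  by_contra hF
  rw [faceDim, if_pos (not_nonempty_iff_eq_empty.1 hF)] at h
  omega

theorem IsFacet.exists_supportsFacet {P F : Set (Pt d)} (hP : faceDim P = d) (hd : 1 ≤ d)
    (hF : IsFacet P F) : ∃ u c, SupportsFacet P F u c := by
  rcases hF.1 with rfl | rfl | ⟨u, c, hs⟩
  · have := hF.2
    omega
  · exact absurd (nonempty_of_faceDim_nonneg (by rw [hF.2]; omega)) not_nonempty_empty
  · exact ⟨u, c, hs⟩

theorem vectorSpan_eq_top_of_faceDim_eq {P : Set (Pt d)} (hP : faceDim P = d) :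
    vectorSpan ℝ P = ⊤ := by
  have hne := (nonempty_of_faceDim_nonneg (hP ▸ Int.natCast_nonneg d)).ne_empty
  rw [faceDim, if_neg hne] at hP
  exact Submodule.eq_top_of_finrank_eq (by rw [finrank_euclideanSpace_fin]; exact_mod_cast hP)

theorem isFacet_setOf_inner_eq {V : Finset (Pt d)} {u : Pt d} {c : ℝ}
    (hc : ∀ p ∈ V, c ≤ ⟪u, p⟫_ℝ) {p₀ : Pt d} (hp₀ : p₀ ∈ V) (hp₀c : ⟪u, p₀⟫_ℝ = c)
    (hrank : Module.finrank ℝ (vectorSpan ℝ (V.filter fun p => ⟪u, p⟫_ℝ = c : Set (Pt d))) + 1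
      = d) :
    IsFacet (convexHull ℝ ↑V) {x ∈ convexHull ℝ (V : Set (Pt d)) | ⟪u, x⟫_ℝ = c} := by
  refine ⟨Or.inr (Or.inr ⟨u, c, fun x hx => le_inner_of_mem_convexHull hc hx, rfl⟩), ?_⟩
  have hne : {x ∈ convexHull ℝ (V : Set (Pt d)) | ⟪u, x⟫_ℝ = c} ≠ ∅ :=
    Set.nonempty_iff_ne_empty.1 ⟨p₀, subset_convexHull ℝ _ hp₀, hp₀c⟩
  rw [faceDim, if_neg hne, setOf_inner_eq_convexHull_filter hc, ← direction_affineSpan,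
    affineSpan_convexHull, direction_affineSpan]
  omega

theorem exists_facet_superset_of_inner_ne {V : Finset (Pt d)}
    (hV : vectorSpan ℝ (V : Set (Pt d)) = ⊤) {u : Pt d} {c : ℝ} (hc : ∀ p ∈ V, c ≤ ⟪u, p⟫_ℝ)
    {p₀ : Pt d} (hp₀ : p₀ ∈ V) (hp₀c : ⟪u, p₀⟫_ℝ = c) {z : Pt d} (hz : ⟪u, z⟫_ℝ ≠ c) :
    ∃ F u' c', IsFacet (convexHull ℝ ↑V) F ∧ SupportsFacet (convexHull ℝ ↑V) F u' c' ∧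
      {x ∈ convexHull ℝ (V : Set (Pt d)) | ⟪u, x⟫_ℝ = c} ⊆ F ∧
      ⟪u', z⟫_ℝ - c' = ⟪u, z⟫_ℝ - c := by
  induction hn : (V.filter fun p => ⟪u, p⟫_ℝ ≠ c).card using Nat.strong_induction_on
    generalizing u c with
  | _ n ih =>
  set T := V.filter fun p => ⟪u, p⟫_ℝ = c
  have hu : u ≠ 0 := by
    rintro rfl
    rw [inner_zero_left] at hp₀c hz
    exact hz hp₀c
  have hTlt : Module.finrank ℝ (vectorSpan ℝ (T : Set (Pt d))) < d := by
    refine (Submodule.finrank_le _).trans_eq finrank_euclideanSpace_fin |>.lt_of_ne fun h => ?_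
    have hu' := mem_orthogonal_vectorSpan (A := (T : Set (Pt d))) (u := u) (c := c)
      fun p hp => (Finset.mem_filter.1 hp).2
    rw [Submodule.eq_top_of_finrank_eq (h.trans finrank_euclideanSpace_fin.symm),
      Submodule.top_orthogonal_eq_bot] at hu'
    exact hu hu'
  by_cases hfacet : Module.finrank ℝ (vectorSpan ℝ (T : Set (Pt d))) + 1 = d
  · exact ⟨_, u, c, isFacet_setOf_inner_eq hc hp₀ hp₀c hfacet,
      ⟨fun x hx => le_inner_of_mem_convexHull hc hx, rfl⟩, subset_rfl, rfl⟩
  have hzT : vectorSpan ℝ (insert z (T : Set (Pt d))) ≠ ⊤ := by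
    intro htop
    have := finrank_vectorSpan_insert_le_set ℝ (T : Set (Pt d)) z
    rw [htop, finrank_top, finrank_euclideanSpace_fin] at this
    omega
  obtain ⟨u', c', hc', hTT', ⟨p, hp, hpc, hpc'⟩, hz'⟩ := exists_rotated_support hV hc hp₀ hp₀c hzT
  have hcard : (V.filter fun p => ⟪u', p⟫_ℝ ≠ c').card < n := by
    refine hn ▸ Finset.card_lt_card ((Finset.ssubset_iff_of_subset ?_).2 ?_)
    · exact Finset.monotone_filter_right _ fun q hq hqc => mt (hTT' q hq) hqc
    · exact ⟨p, Finset.mem_filter.2 ⟨hp, hpc⟩, fun h => (Finset.mem_filter.1 h).2 hpc'⟩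
  obtain ⟨F, u'', c'', hF, hFs, hsub, hz''⟩ := ih _ hcard hc' (hTT' p₀ hp₀ hp₀c)
    (sub_ne_zero.1 (hz' ▸ sub_ne_zero.2 hz)) rfl
  refine ⟨F, u'', c'', hF, hFs, subset_trans ?_ hsub, hz''.trans hz'⟩
  rw [setOf_inner_eq_convexHull_filter hc, setOf_inner_eq_convexHull_filter hc']
  exact convexHull_mono fun q hq => by
    simp only [Finset.coe_filter, mem_ofPred_eq] at hq ⊢
    exact ⟨hq.1, hTT' q hq.1 hq.2⟩

end Polytope

section PseudoStack

variable {d : ℕ}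

theorem isFace_pseudoStack_of_eq_setOf {P G : Set (Pt d)} (hP : Convex ℝ P) {u v : Pt d}
    {c : ℝ} (hPc : ∀ x ∈ P, c ≤ ⟪u, x⟫_ℝ) (hv : c < ⟪u, v⟫_ℝ)
    (hG : G = {x ∈ P | ⟪u, x⟫_ℝ = c}) : IsFace (pseudoStack P v) G := by
  refine Or.inr (Or.inr ⟨u, c, fun x hx => le_inner_of_mem_convexHull ?_ hx, ?_⟩)
  · rintro x (hx | rfl)
    exacts [hPc x hx, hv.le]
  · rw [pseudoStack, union_singleton, setOf_inner_eq_convexHull_insert hP hPc hv, hG]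

theorem isFace_pseudoStack_of_subset {P G F : Set (Pt d)} (hP : Convex ℝ P) (hG : IsFace P G)
    {u v : Pt d} {c : ℝ} (hFs : SupportsFacet P F u c) (hGF : G ⊆ F) (hv : c < ⟪u, v⟫_ℝ) :
    IsFace (pseudoStack P v) G := by
  rcases hG with rfl | rfl | ⟨w, b, hw, rfl⟩
  · exact isFace_pseudoStack_of_eq_setOf hP hFs.1 hv
      ((hGF.trans hFs.2.subset).antisymm (sep_subset _ _))
  · exact Or.inr (Or.inl rfl)
  · obtain ⟨u', c', hu', hv', heq⟩ := exists_support_inter_of_lt hFs.1 hw hv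
    refine isFace_pseudoStack_of_eq_setOf hP hu' hv' (heq ▸ ?_)
    ext x
    exact ⟨fun hx => ⟨hx.1, (hFs.2 ▸ hGF hx).2, hx.2⟩, fun hx => ⟨hx.1, hx.2.2⟩⟩

theorem exists_facet_lt_of_isFace_pseudoStack {P G : Set (Pt d)} (hP : IsDPolytope P)
    {v : Pt d} (hvP : v ∉ P) (hGQ : IsFace (pseudoStack P v) G) (hGP : G ⊆ P)
    (hG : G.Nonempty) :
    ∃ F u c, IsFacet P F ∧ SupportsFacet P F u c ∧ G ⊆ F ∧ c < ⟪u, v⟫_ℝ := by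
  obtain ⟨⟨V, rfl⟩, hdim⟩ := hP
  have hV : vectorSpan ℝ (V : Set (Pt d)) = ⊤ := by
    rw [← direction_affineSpan, ← affineSpan_convexHull, direction_affineSpan]
    exact vectorSpan_eq_top_of_faceDim_eq hdim
  have hPQ : convexHull ℝ (V : Set (Pt d)) ⊆ pseudoStack (convexHull ℝ ↑V) v :=
    subset_union_left.trans (subset_convexHull ℝ _)
  have hvQ : v ∈ pseudoStack (convexHull ℝ (V : Set (Pt d))) v :=
    subset_convexHull ℝ _ (Or.inr rfl)
  rcases hGQ with rfl | rfl | ⟨u, c, hQc, rfl⟩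
  · exact absurd (hGP hvQ) hvP
  · exact absurd hG not_nonempty_empty
  have hc : ∀ p ∈ V, c ≤ ⟪u, p⟫_ℝ := fun p hp => hQc p (hPQ (subset_convexHull ℝ _ hp))
  have hGeq : {x ∈ pseudoStack (convexHull ℝ ↑V) v | ⟪u, x⟫_ℝ = c} =
      {x ∈ convexHull ℝ (V : Set (Pt d)) | ⟪u, x⟫_ℝ = c} :=
    Subset.antisymm (fun x hx => ⟨hGP hx, hx.2⟩) fun x hx => ⟨hPQ hx.1, hx.2⟩
  obtain ⟨p₀, hp₀⟩ : (V.filter fun p => ⟪u, p⟫_ℝ = c).Nonempty := by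
    rw [← Finset.coe_nonempty, ← convexHull_nonempty_iff (𝕜 := ℝ),
      ← setOf_inner_eq_convexHull_filter hc, ← hGeq]
    exact hG
  obtain ⟨hp₀V, hp₀c⟩ := Finset.mem_filter.1 hp₀
  have hvc : c < ⟪u, v⟫_ℝ := (hQc v hvQ).lt_of_ne fun h => hvP (hGP ⟨hvQ, h.symm⟩)
  obtain ⟨F, u', c', hF, hFs, hsub, hdist⟩ :=
    exists_facet_superset_of_inner_ne hV hc hp₀V hp₀c hvc.ne'
  exact ⟨F, u', c', hF, hFs, hGeq ▸ hsub, by linarith⟩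

end PseudoStack

theorem face_survives_pseudoStack_iff_general {d : ℕ}
    (P S : Set (Pt d)) (𝓕 𝓝 : Set (Set (Pt d))) (v : Pt d)
    (G : Set (Pt d)) (k : ℤ)
    (h : PseudoStackSetup P S 𝓕 𝓝) (hv : v ∈ PseudoRegion P S 𝓕 𝓝)
    (hk0 : 0 ≤ k)
    (hG : IsFace P G) (hGd : faceDim G = k) :
    IsFace (pseudoStack P v) G ↔
      ∃ F', IsFacet P F' ∧ F' ≠ S ∧ F' ∉ 𝓕 ∧ F' ∉ 𝓝 ∧ G ⊆ F' := by
  obtain ⟨hP, hd, ⟨hS, -⟩, -⟩ := h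
  obtain ⟨uS, cS, hSs⟩ := hS.exists_supportsFacet hP.2 (by omega)
  have hvP : v ∉ P := fun hvP =>
    ((hv S uS cS hS hSs).1 (Or.inl rfl)).not_ge (hSs.1 v hvP)
  constructor
  · intro hGQ
    obtain ⟨F, u, c, hF, hFs, hGF, hvF⟩ :=
      exists_facet_lt_of_isFace_pseudoStack hP hvP hGQ hG.subset
        (nonempty_of_faceDim_nonneg (hGd ▸ hk0))
    have hvF' := hv F u c hF hFs
    refine ⟨F, hF, ?_, fun hF𝓕 => ?_, fun hF𝓝 => ?_, hGF⟩
    · rintro rfl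
      exact (hvF'.1 (Or.inl rfl)).not_gt hvF
    · exact (hvF'.2.1 hF𝓕).not_gt hvF
    · exact (hvF'.1 (Or.inr hF𝓝)).not_gt hvF
  · rintro ⟨F, hF, hFS, hF𝓕, hF𝓝, hGF⟩
    obtain ⟨u, c, hFs⟩ := hF.exists_supportsFacet hP.2 (by omega)
    exact isFace_pseudoStack_of_subset hP.1.convex hG hFs hGF
      ((hv F u c hF hFs).2.2 ⟨hFS, hF𝓝, hF𝓕⟩)

theorem face_survives_pseudoStack_iff {d : ℕ}
    (P S : Set (Pt d)) (𝓕 𝓝 : Set (Set (Pt d))) (v : Pt d)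
    (G : Set (Pt d)) (k : ℤ)
    (h : PseudoStackSetup P S 𝓕 𝓝) (hv : v ∈ PseudoRegion P S 𝓕 𝓝)
    (hk0 : 0 ≤ k) (hkd : k ≤ (d : ℤ) - 2)
    (hG : IsFace P G) (hGd : faceDim G = k) :
    IsFace (pseudoStack P v) G ↔
      ∃ F', IsFacet P F' ∧ F' ≠ S ∧ F' ∉ 𝓕 ∧ F' ∉ 𝓝 ∧ G ⊆ F' :=
  face_survives_pseudoStack_iff_general P S 𝓕 𝓝 v G k h hv hk0 hG hGd
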